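/- Let s_q(x) = x * prod_{i=1}^{q-1} (x + q - 2i) for q >= 1 (and s_0 = 1) be the binomial (convolution) polynomials of h(x) = x + sqrt(x^2+1), i.e. sum_{q>=0} s_q(φ) x^q / q! = exp(φ log(x + sqrt(x^2+1))) = (x + sqrt(x^2+1))^φ. Then [x^q] (x + sqrt(x^2+1))^φ = s_q(φ)/q! for all q, where φ is an indeterminate; equivalently, the exponential Riordan matrix (1, log(x + sqrt(x^2+1)))_E has n-th row polynomial x * prod_{i=1}^{n-1}(x + n - 2i) for n >= 1. -/

import Mathlib

open Nat PowerSeries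


lemma icc_range {M : Type*} [CommMonoid M] (q : ℕ) (f : ℕ → M) :
    ∏ i ∈ Finset.Icc 1 (q - 1), f i = ∏ i ∈ Finset.range (q - 1), f (1 + i) := by
  rw [← Finset.Ico_add_one_right_eq_Icc, Finset.prod_Ico_eq_prod_range]
  simp

lemma derivativeFun_C' {R : Type*} [CommSemiring R] (r : R) :
    derivativeFun (C r : R⟦X⟧) = 0 := derivative_C

lemma coeff_derivativeFun' {R : Type*} [CommSemiring R] (f : R⟦X⟧) (n : ℕ) :
    coeff n f.derivativeFun = coeff (n + 1) f * (n + 1) := coeff_derivative f n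

lemma key (q : ℕ) (hq : 1 ≤ q) :
    (Polynomial.X : Polynomial ℚ) *
        ∏ i ∈ Finset.Icc 1 (q + 2 - 1), (Polynomial.X + Polynomial.C (((q:ℚ) + 2) - 2 * i))
      = (Polynomial.X ^ 2 - (Polynomial.C (q:ℚ)) ^ 2) *
        (Polynomial.X * ∏ i ∈ Finset.Icc 1 (q - 1), (Polynomial.X + Polynomial.C ((q:ℚ) - 2 * i))) := by
  rw [icc_range, icc_range]
  have h1 : q + 2 - 1 = (q - 1) + 1 + 1 := by omega
  have h2 : (((q - 1 : ℕ) : ℚ)) = (q:ℚ) - 1 := by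
    rw [Nat.cast_sub hq]; norm_num
  rw [h1, Finset.prod_range_succ, Finset.prod_range_succ']
  have e1 : (Polynomial.X : Polynomial ℚ) + Polynomial.C ((q:ℚ) + 2 - 2 * ((1:ℕ) + ((q-1) + 1) : ℕ))
      = Polynomial.X - Polynomial.C (q:ℚ) := by
    push_cast [h2]
    rw [show (q:ℚ) + 2 - 2 * (1 + ((q:ℚ) - 1 + 1)) = -(q:ℚ) by ring, map_neg, sub_eq_add_neg]
  have e0 : (Polynomial.X : Polynomial ℚ) + Polynomial.C ((q:ℚ) + 2 - 2 * ((1 + 0 : ℕ) : ℚ))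
      = Polynomial.X + Polynomial.C (q:ℚ) := by
    norm_num
  have emid : ∏ i ∈ Finset.range (q - 1),
        ((Polynomial.X : Polynomial ℚ) + Polynomial.C ((q:ℚ) + 2 - 2 * ((1 + (i + 1) : ℕ) : ℚ)))
      = ∏ i ∈ Finset.range (q - 1), (Polynomial.X + Polynomial.C ((q:ℚ) - 2 * ((1 + i : ℕ) : ℚ))) := by
    refine Finset.prod_congr rfl fun i _ => ?_
    push_cast
    ring_nf
  rw [e1, e0, emid]
  rw [show (Polynomial.C (q:ℚ))^2 = Polynomial.C (q:ℚ) * Polynomial.C (q:ℚ) by ring]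
  ring



/-- With `s = √(x²+1)` (constant term 1), `h = x + s`, and `H = h^φ = exp(φ arcsinh x)`
over `ℚ[φ]` characterized by `H(0) = 1` and `H' h = φ h' H`, one has
`[x^q] H = (φ/q!) ∏_{i=1}^{q-1} (φ + q - 2i)` for `q ≥ 1`. -/
theorem stmt17 (s H : PowerSeries (Polynomial ℚ))
    (hs0 : constantCoeff (R := Polynomial ℚ) s = 1)
    (hs : s ^ 2 = X ^ 2 + 1)
    (hH0 : constantCoeff (R := Polynomial ℚ) H = 1)
    (hH : H.derivativeFun * (X + s)
        = C (R := Polynomial ℚ) Polynomial.X * (X + s).derivativeFun * H) :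
    ∀ q : ℕ, 1 ≤ q →
      coeff (R := Polynomial ℚ) q H
        = (q ! : ℚ)⁻¹ • (Polynomial.X *
            ∏ i ∈ Finset.Icc 1 (q - 1), (Polynomial.X + Polynomial.C ((q : ℚ) - 2 * i))) := by
  have hXd : (X : (Polynomial ℚ)⟦X⟧).derivativeFun = 1 := derivative_X
  have two_ne : (2 : (Polynomial ℚ)⟦X⟧) ≠ 0 := by
    intro h
    have := congrArg (constantCoeff (R := Polynomial ℚ)) h
    rw [map_ofNat] at this; norm_num at this
  -- s' * s = X
  have hds : s.derivativeFun * s = X := by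
    have h := congrArg derivativeFun hs
    rw [pow_two, pow_two, derivativeFun_mul, derivativeFun_add, derivativeFun_mul,
      derivativeFun_one, hXd] at h
    apply mul_left_cancel₀ two_ne
    simp only [smul_eq_mul] at h ⊢
    linear_combination h
  have hXs_ne : (X + s : (Polynomial ℚ)⟦X⟧) ≠ 0 := by
    intro h
    have := congrArg (constantCoeff (R := Polynomial ℚ)) h
    simp [hs0] at this
  have hadd : (X + s).derivativeFun = 1 + s.derivativeFun := by
    rw [derivativeFun_add, hXd]
  rw [hadd] at hH
  -- H' * s = C φ * H
  have hHs : H.derivativeFun * s = C (R := Polynomial ℚ) Polynomial.X * H := by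
    apply mul_right_cancel₀ hXs_ne
    linear_combination s * hH + (C (R := Polynomial ℚ) Polynomial.X * H) * hds
  -- differentiate: H'' * s + H' * s' = C φ * H'
  have h3 : H.derivativeFun.derivativeFun * s + H.derivativeFun * s.derivativeFun
      = C (R := Polynomial ℚ) Polynomial.X * H.derivativeFun := by
    have h := congrArg derivativeFun hHs
    rw [derivativeFun_mul, derivativeFun_mul, derivativeFun_C'] at h
    simp only [smul_eq_mul, smul_zero] at h
    linear_combination h
  -- second order ODE
  have hode : H.derivativeFun.derivativeFun * X * X + H.derivativeFun.derivativeFun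
      + H.derivativeFun * X = C (R := Polynomial ℚ) Polynomial.X * (C (R := Polynomial ℚ) Polynomial.X * H) := by
    have hs2 : s * s = X ^ 2 + 1 := by rw [← pow_two]; exact hs
    linear_combination s * h3 - H.derivativeFun.derivativeFun * hs2
      - H.derivativeFun * hds + C (R := Polynomial ℚ) Polynomial.X * hHs
  have a1 : coeff (R := Polynomial ℚ) 1 H = Polynomial.X := by
    have h := congrArg (constantCoeff (R := Polynomial ℚ)) hHs
    rw [map_mul, map_mul, hs0, hH0, constantCoeff_C, mul_one, mul_one,
      ← coeff_zero_eq_constantCoeff, coeff_derivativeFun'] at h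
    simpa using h
  have a0 : coeff (R := Polynomial ℚ) 0 H = 1 := by rw [coeff_zero_eq_constantCoeff]; exact hH0
  have hrec : ∀ q : ℕ, coeff (R := Polynomial ℚ) (q+2) H * (((q+2)*(q+1) : ℕ) : Polynomial ℚ)
      = (Polynomial.X^2 - (Polynomial.C (q:ℚ))^2) * coeff (R := Polynomial ℚ) q H := by
    intro q
    match q with
    | 0 =>
      have h := congrArg (coeff (R := Polynomial ℚ) 0) hode
      simp only [map_add, coeff_zero_mul_X, coeff_derivativeFun', coeff_C_mul] at h
      rw [a0] at h ⊢
      norm_num at h ⊢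
      linear_combination h
    | 1 =>
      have h := congrArg (coeff (R := Polynomial ℚ) (0+1)) hode
      simp only [map_add, coeff_succ_mul_X, coeff_zero_mul_X, coeff_derivativeFun',
        coeff_C_mul] at h
      norm_num at h ⊢
      linear_combination h
    | (m+2) =>
      have h := congrArg (coeff (R := Polynomial ℚ) (m+1+1)) hode
      simp only [map_add, coeff_succ_mul_X, coeff_derivativeFun', coeff_C_mul] at h
      have hc : (Polynomial.C (((m+2:ℕ)):ℚ)) = (((m+2:ℕ)):Polynomial ℚ) := by
        simp [map_natCast, map_ofNat]
      rw [hc]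
      norm_num at h ⊢
      push_cast at h ⊢
      linear_combination h
  -- the target formula
  set F : ℕ → Polynomial ℚ := fun n => (n ! : ℚ)⁻¹ • (Polynomial.X *
      ∏ i ∈ Finset.Icc 1 (n - 1), (Polynomial.X + Polynomial.C ((n : ℚ) - 2 * i))) with hF
  have hb1 : coeff (R := Polynomial ℚ) 1 H = F 1 := by
    rw [a1, hF]
    simp
  have hb2 : coeff (R := Polynomial ℚ) 2 H = F 2 := by
    have h := hrec 0
    rw [a0, mul_one] at h
    have c_ne : (((0+2)*(0+1) : ℕ) : Polynomial ℚ) ≠ 0 := by norm_num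
    apply mul_right_cancel₀ c_ne
    rw [h, hF]
    simp only [Polynomial.smul_eq_C_mul]
    norm_num [Finset.Icc_self]
    ring_nf
    rw [show ((2:Polynomial ℚ)) = Polynomial.C (2:ℚ) from (map_ofNat Polynomial.C 2).symm]
    rw [mul_assoc, ← map_mul]
    norm_num
  have hstep : ∀ q : ℕ, 1 ≤ q → coeff (R := Polynomial ℚ) q H = F q → coeff (R := Polynomial ℚ) (q+2) H = F (q+2) := by
    intro q hq ih
    have hr := hrec q
    have hk := key q hq
    have hprod : (∏ i ∈ Finset.Icc 1 (q+2-1), (Polynomial.X + Polynomial.C ((((q+2:ℕ)):ℚ) - 2*i)))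
        = ∏ i ∈ Finset.Icc 1 (q+2-1), (Polynomial.X + Polynomial.C (((q:ℚ)+2) - 2*i)) := by
      refine Finset.prod_congr rfl fun i _ => ?_
      push_cast
      ring_nf
    have c_ne : (((q+2)*(q+1) : ℕ) : Polynomial ℚ) ≠ 0 := by
      rw [Nat.cast_ne_zero]
      positivity
    apply mul_right_cancel₀ c_ne
    rw [hr, ih, hF]
    simp only [Polynomial.smul_eq_C_mul]
    rw [hprod, hk]
    have hc2 : Polynomial.C ((((q+2)!:ℚ))⁻¹) * (((q+2)*(q+1) : ℕ) : Polynomial ℚ)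
        = Polynomial.C (((q ! :ℚ))⁻¹) := by
      rw [← map_natCast (Polynomial.C (R:=ℚ)) (((q+2)*(q+1))), ← map_mul]
      congr 1
      have h3 : ((q : ℕ)! : ℚ) ≠ 0 := Nat.cast_ne_zero.mpr (factorial_ne_zero _)
      push_cast [factorial_succ]
      field_simp
      ring
    linear_combination (- (Polynomial.X^2 - (Polynomial.C (q:ℚ))^2) *
      (Polynomial.X * ∏ i ∈ Finset.Icc 1 (q-1),
        (Polynomial.X + Polynomial.C ((q:ℚ) - 2*i)))) * hc2
  have main : ∀ k : ℕ, coeff (R := Polynomial ℚ) (k+1) H = F (k+1) ∧ coeff (R := Polynomial ℚ) (k+2) H = F (k+2) := by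
    intro k
    induction k with
    | zero => exact ⟨hb1, hb2⟩
    | succ n ih => exact ⟨ih.2, hstep (n+1) (by omega) ih.1⟩
  intro q hq
  obtain ⟨k, rfl⟩ : ∃ k, q = k + 1 := ⟨q - 1, by omega⟩
  simpa [hF] using (main k).1
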